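/- Let A = H₁ ⊗ B for a Poisson algebra B. Then every bracket cyclic cocycle on A vanishes: if a skew-symmetric bilinear form (·|·) on A satisfies (ab|c) + (bc|a) + (ac|b) = 0 and ([a,b]|c) = (a'|bc) − (b'|ac) (where x' = [x,1] = 0 for Poisson brackets), then (·|·) = 0. -/

import Mathlib

/-!
For a Poisson bracket `x' = [x, 1] = 0`, so the bracket condition says that `φ` vanishes on
`[A, A] × A`. The bracket with `p = X 0` is `∂/∂q = pderiv 1`, which is surjective on
`B[p, q]` in characteristic zero; hence `[A, A] = A` and `φ = 0`.
-/

open MvPolynomial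

/-- The Poisson bracket on `A = H₁ ⊗ B`, modelled as polynomials `B[p,q]` over the Poisson
algebra `B`. -/
noncomputable def tensorBracket {F B : Type*} [Field F] [CommRing B] [Algebra F B]
    (brB : B →ₗ[F] B →ₗ[F] B) (f g : MvPolynomial (Fin 2) B) : MvPolynomial (Fin 2) B :=
  pderiv 0 f * pderiv 1 g - pderiv 1 f * pderiv 0 g +
    ∑ m ∈ f.support, ∑ n ∈ g.support, monomial (m + n) (brB (coeff m f) (coeff n g))

lemma LinearMap.apply_one_left_eq_zero_of_leibniz {R A : Type*} [CommSemiring R] [Ring A]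
    [Module R A] (br : A →ₗ[R] A →ₗ[R] A)
    (hleib : ∀ a b c : A, br (a * b) c = a * br b c + br a c * b) (c : A) : br 1 c = 0 := by
  simpa using hleib 1 1 c

theorem MvPolynomial.pderiv_surjective {σ R : Type*} [CommSemiring R] (F : Type*)
    [DivisionSemiring F] [CharZero F] [Module F R] (i : σ) :
    Function.Surjective (pderiv (R := R) i) := by
  classical
  intro f
  induction f using MvPolynomial.induction_on' with
  | monomial u a =>
    have hu : ((u i + 1 : ℕ) : F) ≠ 0 := Nat.cast_ne_zero.mpr (u i).succ_ne_zero
    refine ⟨monomial (u + Finsupp.single i 1) (((u i + 1 : ℕ) : F)⁻¹ • a), ?_⟩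
    rw [pderiv_monomial, add_tsub_cancel_right, Finsupp.add_apply, Finsupp.single_eq_same]
    congr 1
    calc (((u i + 1 : ℕ) : F)⁻¹ • a) * ((u i + 1 : ℕ) : R)
        = (u i + 1) • (((u i + 1 : ℕ) : F)⁻¹ • a) := by rw [nsmul_eq_mul, Nat.cast_comm]
      _ = a := by rw [← Nat.cast_smul_eq_nsmul F, smul_smul, mul_inv_cancel₀ hu, one_smul]
  | add p q hp hq =>
    obtain ⟨gp, rfl⟩ := hp
    obtain ⟨gq, rfl⟩ := hq
    exact ⟨gp + gq, map_add _ gp gq⟩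

section tensorBracket

variable {F B : Type*} [Field F] [CommRing B] [Algebra F B] (brB : B →ₗ[F] B →ₗ[F] B)

lemma tensorBracket_one_right (h : ∀ c, brB c 1 = 0) (f : MvPolynomial (Fin 2) B) :
    tensorBracket brB f 1 = 0 := by
  rw [tensorBracket, Finset.sum_eq_zero fun m _ => Finset.sum_eq_zero fun n _ => ?_]
  · simp
  · rw [coeff_one]
    split_ifs <;> simp [h]

lemma tensorBracket_X_zero_left (h : ∀ c, brB 1 c = 0) (g : MvPolynomial (Fin 2) B) :
    tensorBracket brB (X 0) g = pderiv 1 g := by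
  rw [tensorBracket, Finset.sum_eq_zero fun m _ => Finset.sum_eq_zero fun n _ => ?_]
  · simp
  · rw [coeff_X]
    split_ifs <;> simp [h]

end tensorBracket

theorem stmt17_general (F : Type*) [Field F] [CharZero F]
    (B : Type*) [CommRing B] [Algebra F B]
    (brB : B →ₗ[F] B →ₗ[F] B)
    -- `[·,·]` is a Poisson bracket on `B`
    (halt : ∀ a : B, brB a a = 0)
    (hleib : ∀ a b c : B, brB (a * b) c = a * brB b c + brB a c * b)
    -- a bracket cyclic cocycle on `A = H₁ ⊗ B`
    (φ : MvPolynomial (Fin 2) B →ₗ[F] MvPolynomial (Fin 2) B →ₗ[F] F)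
    -- `([a,b]|c) = (a'|bc) - (b'|ac)` where `x' = [x,1]`
    (hbr : ∀ a b c, φ (tensorBracket brB a b) c
      = φ (tensorBracket brB a 1) (b * c) - φ (tensorBracket brB b 1) (a * c)) :
    ∀ a b, φ a b = 0 := by
  have hleft : ∀ c, brB 1 c = 0 := brB.apply_one_left_eq_zero_of_leibniz hleib
  have hright : ∀ c, brB c 1 = 0 := fun c => by
    rw [← LinearMap.IsAlt.neg halt, hleft, neg_zero]
  intro a b
  obtain ⟨g, rfl⟩ := pderiv_surjective F 1 a
  have h := hbr (X 0) g b
  rwa [tensorBracket_X_zero_left brB hleft, tensorBracket_one_right brB hright,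
    tensorBracket_one_right brB hright, map_zero, LinearMap.zero_apply, LinearMap.zero_apply,
    sub_zero] at h

/-- every bracket cyclic cocycle on `A = H₁ ⊗ B` vanishes. -/
theorem stmt17 (F : Type*) [Field F] [CharZero F]
    (B : Type*) [CommRing B] [Algebra F B]
    (brB : B →ₗ[F] B →ₗ[F] B)
    -- `[·,·]` is a Poisson bracket on `B`
    (halt : ∀ a : B, brB a a = 0)
    (hjac : ∀ a b c : B, brB (brB a b) c + brB (brB b c) a + brB (brB c a) b = 0)
    (hleib : ∀ a b c : B, brB (a * b) c = a * brB b c + brB a c * b)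
    -- a bracket cyclic cocycle on `A = H₁ ⊗ B`
    (φ : MvPolynomial (Fin 2) B →ₗ[F] MvPolynomial (Fin 2) B →ₗ[F] F)
    (hskew : ∀ a b, φ a b = - φ b a)
    (hcyc : ∀ a b c, φ (a * b) c + φ (b * c) a + φ (a * c) b = 0)
    -- `([a,b]|c) = (a'|bc) - (b'|ac)` where `x' = [x,1]`
    (hbr : ∀ a b c, φ (tensorBracket brB a b) c
      = φ (tensorBracket brB a 1) (b * c) - φ (tensorBracket brB b 1) (a * c)) :
    ∀ a b, φ a b = 0 :=
  stmt17_general F B brB halt hleib φ hbr
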